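/- arXiv:2001.09789 — 4 statements merged into one kernel-verified Lean document; each statement's English description precedes it below -/
import Mathlib

section
/- Let V be a finite-dimensional real normed vector space, let N : V → V be a nilpotent continuous linear endomorphism, and let r be a nonzero real number. Then the range of the endomorphism id − exp(r • N) equals the range of N, and the kernel of id − exp(r • N) equals the kernel of N. In particular, id − exp(r • N) induces a linear bijection from V / ker(N) onto the range of N. -/
/-!
For nilpotent `a`, the exponential series is a finite sum, so `exp a - 1 = a * u` with
`u = ∑ aⁱ / (i + 1)!`. This `u` is a polynomial in `a` with constant term `1`, hence a unit commuting
with `a`. Consequently `1 - exp (r • N)` is `r • N` composed on either side with an invertible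
operator, which preserves the range and the kernel of `r • N`, and those of `N` when `r ≠ 0`.
-/

open Finset NormedSpace
open scoped Nat

section ExpNilpotent

variable {𝔸 : Type*} [Ring 𝔸]

theorem isUnit_sum_inv_factorial_succ_smul_pow (𝕂 : Type*) [Field 𝕂] [Algebra 𝕂 𝔸] {a : 𝔸}
    (ha : IsNilpotent a) (k : ℕ) :
    IsUnit (∑ i ∈ range (k + 1), ((i + 1)! : 𝕂)⁻¹ • a ^ i) := by
  rw [sum_range_succ', add_comm]
  simp only [zero_add, Nat.factorial_one, Nat.cast_one, inv_one, pow_zero, one_smul]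
  refine IsNilpotent.isUnit_one_add (Commute.isNilpotent_sum (fun i _ ↦ ?_) fun i j _ _ ↦ ?_)
  · exact (ha.pow_succ i).smul _
  · exact ((Commute.pow_pow_self a _ _).smul_left _).smul_right _

variable (𝕂 : Type*) [Field 𝕂] [CharZero 𝕂] [Algebra 𝕂 𝔸] [TopologicalSpace 𝔸]
  [IsTopologicalRing 𝔸]

theorem NormedSpace.exp_eq_sum_of_pow_eq_zero {a : 𝔸} {k : ℕ} (h : a ^ k = 0) :
    exp a = ∑ i ∈ range k, (i ! : 𝕂)⁻¹ • a ^ i := by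
  rw [exp_eq_tsum 𝕂]
  exact tsum_eq_sum fun i hi ↦ by
    rw [pow_eq_zero_of_le (not_lt.1 (mem_range.not.1 hi)) h, smul_zero]

theorem NormedSpace.exp_sub_one_eq_mul_sum_of_pow_eq_zero {a : 𝔸} {k : ℕ}
    (h : a ^ (k + 1) = 0) : exp a - 1 = a * ∑ i ∈ range k, ((i + 1)! : 𝕂)⁻¹ • a ^ i := by
  rw [exp_eq_sum_of_pow_eq_zero 𝕂 h, sum_range_succ', mul_sum]
  simp [pow_succ']

end ExpNilpotent

theorem NormedSpace.exists_isUnit_commute_exp_sub_one_eq_mul (𝕂 : Type*) {𝔸 : Type*} [Field 𝕂]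
    [CharZero 𝕂] [Ring 𝔸] [Algebra 𝕂 𝔸] [TopologicalSpace 𝔸] [IsTopologicalRing 𝔸] {a : 𝔸}
    (ha : IsNilpotent a) :
    ∃ u : 𝔸, IsUnit u ∧ Commute a u ∧ exp a - 1 = a * u := by
  obtain ⟨k, hk⟩ := ha
  exact ⟨_, isUnit_sum_inv_factorial_succ_smul_pow 𝕂 ⟨k, hk⟩ k,
    Commute.sum_right _ _ _ fun i _ ↦ ((Commute.refl a).pow_right i).smul_right _,
    exp_sub_one_eq_mul_sum_of_pow_eq_zero 𝕂 (pow_eq_zero_of_le (by omega) hk)⟩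

namespace Module.End

variable {R M : Type*} [Semiring R] [AddCommMonoid M] [Module R M]

theorem range_mul_of_isUnit (f : Module.End R M) {u : Module.End R M} (hu : IsUnit u) :
    LinearMap.range (f * u) = LinearMap.range f :=
  LinearMap.range_comp_of_range_eq_top f (LinearMap.range_eq_top.2 ((isUnit_iff u).1 hu).2)

theorem ker_mul_of_isUnit (f : Module.End R M) {u : Module.End R M} (hu : IsUnit u) :
    LinearMap.ker (u * f) = LinearMap.ker f :=
  LinearMap.ker_comp_of_ker_eq_bot f (LinearMap.ker_eq_bot_of_injective ((isUnit_iff u).1 hu).1)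

end Module.End

theorem LinearMap.exists_quotEquiv_of_ker_eq_of_range_eq {R M M₂ : Type*} [Ring R]
    [AddCommGroup M] [AddCommGroup M₂] [Module R M] [Module R M₂] (f : M →ₗ[R] M₂)
    {K : Submodule R M} {I : Submodule R M₂} (hK : LinearMap.ker f = K)
    (hI : LinearMap.range f = I) :
    ∃ e : (M ⧸ K) ≃ₗ[R] I, ∀ v, (e (Submodule.Quotient.mk v) : M₂) = f v :=
  ⟨(Submodule.quotEquivOfEq _ _ hK.symm).trans (f.quotKerEquivRange.trans (.ofEq _ _ hI)),
    fun _ ↦ rfl⟩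

theorem range_ker_id_sub_exp_smul_nilpotent_general
    (V : Type*) [NormedAddCommGroup V] [NormedSpace ℝ V]
    (N : V →L[ℝ] V) (hN : IsNilpotent N) (r : ℝ) (hr : r ≠ 0) :
    LinearMap.range (((1 : V →L[ℝ] V) - NormedSpace.exp (r • N) : V →L[ℝ] V) : V →ₗ[ℝ] V)
        = LinearMap.range (N : V →ₗ[ℝ] V) ∧
    LinearMap.ker (((1 : V →L[ℝ] V) - NormedSpace.exp (r • N) : V →L[ℝ] V) : V →ₗ[ℝ] V)
        = LinearMap.ker (N : V →ₗ[ℝ] V) ∧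
    ∃ e : (V ⧸ LinearMap.ker (N : V →ₗ[ℝ] V)) ≃ₗ[ℝ] LinearMap.range (N : V →ₗ[ℝ] V),
      ∀ v : V, (e (Submodule.Quotient.mk v) : V) = v - NormedSpace.exp (r • N) v := by
  obtain ⟨u, hu, hcomm, hexp⟩ := exists_isUnit_commute_exp_sub_one_eq_mul ℝ (hN.smul r)
  have hright : (1 : V →L[ℝ] V) - exp (r • N) = r • N * -u := by rw [← neg_sub, hexp, mul_neg]
  have hleft : (1 : V →L[ℝ] V) - exp (r • N) = -u * (r • N) := hright.trans hcomm.neg_right.eq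
  have hunit : IsUnit ((-u : V →L[ℝ] V) : V →ₗ[ℝ] V) :=
    hu.neg.map ContinuousLinearMap.toLinearMapRingHom
  have hrange : LinearMap.range (((1 : V →L[ℝ] V) - exp (r • N) : V →L[ℝ] V) : V →ₗ[ℝ] V)
      = LinearMap.range (N : V →ₗ[ℝ] V) := by
    rw [hright, ContinuousLinearMap.toLinearMap_mul, Module.End.range_mul_of_isUnit _ hunit,
      ContinuousLinearMap.toLinearMap_smul, LinearMap.range_smul _ _ hr]
  have hker : LinearMap.ker (((1 : V →L[ℝ] V) - exp (r • N) : V →L[ℝ] V) : V →ₗ[ℝ] V)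
      = LinearMap.ker (N : V →ₗ[ℝ] V) := by
    rw [hleft, ContinuousLinearMap.toLinearMap_mul, Module.End.ker_mul_of_isUnit _ hunit,
      ContinuousLinearMap.toLinearMap_smul, LinearMap.ker_smul _ _ hr]
  exact ⟨hrange, hker, LinearMap.exists_quotEquiv_of_ker_eq_of_range_eq _ hker hrange⟩

/-- For a nilpotent continuous linear endomorphism `N` of a finite-dimensional real normed
vector space `V` and a nonzero real number `r`, the endomorphism `id - exp (r • N)` has the
same range and the same kernel as `N`; in particular it induces a linear bijection from
`V ⧸ ker N` onto the range of `N`. -/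
theorem range_ker_id_sub_exp_smul_nilpotent
    (V : Type*) [NormedAddCommGroup V] [NormedSpace ℝ V] [FiniteDimensional ℝ V]
    (N : V →L[ℝ] V) (hN : IsNilpotent N) (r : ℝ) (hr : r ≠ 0) :
    LinearMap.range (((1 : V →L[ℝ] V) - NormedSpace.exp (r • N) : V →L[ℝ] V) : V →ₗ[ℝ] V)
        = LinearMap.range (N : V →ₗ[ℝ] V) ∧
    LinearMap.ker (((1 : V →L[ℝ] V) - NormedSpace.exp (r • N) : V →L[ℝ] V) : V →ₗ[ℝ] V)
        = LinearMap.ker (N : V →ₗ[ℝ] V) ∧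
    ∃ e : (V ⧸ LinearMap.ker (N : V →ₗ[ℝ] V)) ≃ₗ[ℝ] LinearMap.range (N : V →ₗ[ℝ] V),
      ∀ v : V, (e (Submodule.Quotient.mk v) : V) = v - NormedSpace.exp (r • N) v :=
  range_ker_id_sub_exp_smul_nilpotent_general V N hN r hr
end

section
/- Let (X, μ) be a probability space and let φ : ℝ × X → X be a jointly measurable flow: φ(0, ·) = id, φ(s+t, ·) = φ(s, φ(t, ·)) for all s, t ∈ ℝ, and each map φ(t, ·) preserves the measure μ. Let f : X → ℝ be bounded and measurable. Let g : X → ℝ be bounded and measurable, let K ≥ 0, and suppose there is a bounded measurable function Dg : X → ℝ with |Dg| ≤ K everywhere such that for every x ∈ X the function t ↦ g(φ(t, x)) is differentiable with derivative t ↦ Dg(φ(t, x)). Then | ∫_X f·g dμ | ≤ ( sup|g| + K ) · ∫_X sup_{s ∈ [0,1]} | ∫₀^s f(φ(t, x)) dt | dμ(x). -/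
/-!
Averaging over the flow for times in `[0, 1]` does not change `∫ f g dμ`, so it equals
`∫ x, ∫₀¹ f(φ_t x) g(φ_t x) dt dμ(x)`. Along each orbit, `F(s) = ∫₀ˢ f(φ_t x) dt` is absolutely
continuous and `t ↦ g(φ_t x)` is `K`-Lipschitz, so integration by parts gives
`∫₀¹ f(φ_t x) g(φ_t x) dt = g(φ_1 x) F(1) - ∫₀¹ Dg(φ_u x) F(u) du`, which is bounded by
`(sup |g| + K) · sup_{s ∈ [0,1]} |F(s)|`.
-/

open MeasureTheory Set Function

section SupOverIcc

variable {a b : ℝ} {F : ℝ → ℝ}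

theorem ContinuousOn.bddAbove_range_abs_Icc (hF : ContinuousOn F (Icc a b)) :
    BddAbove (range fun s : Icc a b => |F s|) := by
  simpa only [image_eq_range] using isCompact_Icc.bddAbove_image hF.abs

theorem ContinuousOn.biSup_Icc_abs_eq_iSup_subtype (hF : ContinuousOn F (Icc a b)) :
    ⨆ s ∈ Icc a b, |F s| = ⨆ s : Icc a b, |F s| :=
  (ciSup_subtype_fun hF.bddAbove_range_abs_Icc
    (by simpa using Real.iSup_nonneg fun s => abs_nonneg _)).symm

theorem ContinuousOn.abs_le_biSup_Icc_abs (hF : ContinuousOn F (Icc a b)) {s : ℝ}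
    (hs : s ∈ Icc a b) : |F s| ≤ ⨆ s ∈ Icc a b, |F s| := by
  rw [hF.biSup_Icc_abs_eq_iSup_subtype]
  exact le_ciSup hF.bddAbove_range_abs_Icc ⟨s, hs⟩

theorem Continuous.iSup_ratCast_eq {H : ℝ → ℝ} (hH : Continuous H) :
    ⨆ q : ℚ, H q = ⨆ r, H r := by
  rw [← Rat.denseRange_cast.ciSup' hH]
  exact (rangeFactorization_surjective.iSup_comp fun s : range ((↑) : ℚ → ℝ) => H s)

theorem ContinuousOn.biSup_Icc_abs_eq_iSup_rat (hab : a ≤ b) (hF : ContinuousOn F (Icc a b)) :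
    ⨆ s ∈ Icc a b, |F s| = ⨆ q : ℚ, |F (projIcc a b hab q)| := by
  rw [hF.biSup_Icc_abs_eq_iSup_subtype, ← (projIcc_surjective hab).iSup_comp]
  exact ((hF.comp_continuous (continuous_subtype_val.comp continuous_projIcc)
    fun r => Subtype.prop _).abs.iSup_ratCast_eq).symm

end SupOverIcc

section IntegrationByParts

variable {h G G' : ℝ → ℝ} {a b K : ℝ}

theorem lipschitzWith_of_hasDerivAt_of_abs_le (hG : ∀ t, HasDerivAt G (G' t) t)
    (hG' : ∀ t, |G' t| ≤ K) : LipschitzWith K.toNNReal G :=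
  lipschitzWith_of_nnnorm_deriv_le (fun t => (hG t).differentiableAt) fun t => by
    rw [(hG t).deriv, ← NNReal.coe_le_coe, coe_nnnorm, Real.coe_toNNReal']
    exact (hG' t).trans (le_max_left _ _)

theorem intervalIntegral.integral_mul_eq_sub_integral_deriv_mul_primitive
    (hh : IntervalIntegrable h volume a b) (hG : ∀ t, HasDerivAt G (G' t) t)
    (hG' : ∀ t, |G' t| ≤ K) :
    ∫ t in a..b, h t * G t =
      G b * (∫ t in a..b, h t) - ∫ u in a..b, G' u * ∫ t in a..u, h t := by
  have hG_ac : AbsolutelyContinuousOnInterval G a b :=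
    ((lipschitzWith_of_hasDerivAt_of_abs_le hG hG').lipschitzOnWith).absolutelyContinuousOnInterval
  have hH_ac := hh.absolutelyContinuousOnInterval_intervalIntegral left_mem_uIcc
  have hparts := hG_ac.integral_mul_deriv_eq_deriv_mul hH_ac
  simp only [intervalIntegral.integral_same, mul_zero, sub_zero, fun t => (hG t).deriv] at hparts
  rw [← hparts, intervalIntegral.integral_congr_ae]
  filter_upwards [hh.ae_hasDerivAt_integral] with t ht htab
  rw [(ht (uIoc_subset_uIcc htab) a left_mem_uIcc).deriv, mul_comm]

theorem abs_intervalIntegral_mul_le (hab : a ≤ b)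
    (hh : IntervalIntegrable h volume a b) (hG : ∀ t, HasDerivAt G (G' t) t)
    (hG' : ∀ t, |G' t| ≤ K) {C S : ℝ} (hGb : |G b| ≤ C)
    (hS : ∀ s ∈ Icc a b, |∫ t in a..s, h t| ≤ S) :
    |∫ t in a..b, h t * G t| ≤ (C + K * (b - a)) * S := by
  have hK : 0 ≤ K := (abs_nonneg _).trans (hG' a)
  have hboundary : |G b * ∫ t in a..b, h t| ≤ C * S := by
    rw [abs_mul]
    exact mul_le_mul hGb (hS b (right_mem_Icc.2 hab)) (abs_nonneg _) ((abs_nonneg _).trans hGb)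
  have hbulk : |∫ u in a..b, G' u * ∫ t in a..u, h t| ≤ K * S * (b - a) := by
    have := intervalIntegral.norm_integral_le_of_norm_le_const (a := a) (b := b)
      (f := fun u => G' u * ∫ t in a..u, h t) (C := K * S) fun u hu => by
        rw [uIoc_of_le hab] at hu
        rw [Real.norm_eq_abs, abs_mul]
        exact mul_le_mul (hG' u) (hS u (Ioc_subset_Icc_self hu)) (abs_nonneg _) hK
    rwa [abs_of_nonneg (sub_nonneg.2 hab)] at this
  rw [intervalIntegral.integral_mul_eq_sub_integral_deriv_mul_primitive hh hG hG']
  calc _ ≤ |G b * ∫ t in a..b, h t| + |∫ u in a..b, G' u * ∫ t in a..u, h t| := abs_sub _ _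
    _ ≤ C * S + K * S * (b - a) := add_le_add hboundary hbulk
    _ = (C + K * (b - a)) * S := by ring

end IntegrationByParts

theorem MeasureTheory.MeasurePreserving.integral_comp_of_aestronglyMeasurable
    {α β E : Type*} [MeasurableSpace α] [MeasurableSpace β] [NormedAddCommGroup E]
    [NormedSpace ℝ E] {μ : Measure α} {ν : Measure β} {f : α → β}
    (hf : MeasurePreserving f μ ν) {g : β → E} (hg : AEStronglyMeasurable g ν) :
    ∫ x, g (f x) ∂μ = ∫ y, g y ∂ν := by
  rw [← hf.map_eq] at hg ⊢
  exact (integral_map hf.measurable.aemeasurable hg).symm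

section Flow

variable {X : Type*} [MeasurableSpace X] {μ : Measure X}

theorem integral_integral_comp_of_measurePreserving {T E : Type*} [MeasurableSpace T]
    [NormedAddCommGroup E] [NormedSpace ℝ E] [CompleteSpace E] [SFinite μ]
    {ν : Measure T} [IsFiniteMeasure ν]
    {ψ : T → X → X} (hψ_meas : Measurable (uncurry ψ))
    (hψ : ∀ t, MeasurePreserving (ψ t) μ μ) {u : X → E} (hu : StronglyMeasurable u)
    (hu_int : Integrable u μ) :
    ∫ x, ∫ t, u (ψ t x) ∂ν ∂μ = ν.real univ • ∫ x, u x ∂μ := by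
  have hint : Integrable (uncurry fun x t => u (ψ t x)) (μ.prod ν) := by
    refine (integrable_prod_iff' ((hu.comp_measurable
      (hψ_meas.comp measurable_swap)).aestronglyMeasurable)).2 ⟨ae_of_all _ fun t => ?_, ?_⟩
    · exact (hψ t).integrable_comp_of_integrable hu_int
    · show Integrable (fun t => ∫ x, ‖u (ψ t x)‖ ∂μ) ν
      simp only [fun t =>
        (hψ t).integral_comp_of_aestronglyMeasurable hu.norm.aestronglyMeasurable]
      exact integrable_const _
  rw [integral_integral_swap hint]
  simp only [fun t => (hψ t).integral_comp_of_aestronglyMeasurable hu.aestronglyMeasurable]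
  exact integral_const _

theorem integral_intervalIntegral_comp_of_measurePreserving [IsFiniteMeasure μ]
    {φ : ℝ → X → X} (hφ_meas : Measurable (uncurry φ))
    (hφ : ∀ t, MeasurePreserving (φ t) μ μ) {u : X → ℝ} (hu : Measurable u)
    (hu_int : Integrable u μ) {a b : ℝ} (hab : a ≤ b) :
    ∫ x, (∫ t in a..b, u (φ t x)) ∂μ = (b - a) * ∫ x, u x ∂μ := by
  simp only [intervalIntegral.integral_of_le hab]
  rw [integral_integral_comp_of_measurePreserving hφ_meas hφ hu.stronglyMeasurable hu_int,
    measureReal_restrict_apply_univ, Real.volume_real_Ioc_of_le hab, smul_eq_mul]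

end Flow

section ErgodicIntegrals

variable {X : Type*} [MeasurableSpace X]

theorem intervalIntegrable_of_abs_le {h : ℝ → ℝ} (hh : Measurable h) {M : ℝ}
    (hM : ∀ t, |h t| ≤ M) (a b : ℝ) : IntervalIntegrable h volume a b :=
  (intervalIntegrable_const (c := M)).mono_fun' hh.aestronglyMeasurable.restrict
    (ae_of_all _ fun t => (Real.norm_eq_abs _).trans_le (hM t))

theorem measurable_intervalIntegral_of_measurable_uncurry {F : ℝ → X → ℝ}
    (hF : Measurable (uncurry F)) (a b : ℝ) : Measurable fun x => ∫ t in a..b, F t x :=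
  (hF.stronglyMeasurable.integral_prod_left.measurable).sub
    hF.stronglyMeasurable.integral_prod_left.measurable

theorem measurable_biSup_Icc_abs_intervalIntegral {F : ℝ → X → ℝ} (hF : Measurable (uncurry F))
    (hF_int : ∀ x a b, IntervalIntegrable (F · x) volume a b) {a b : ℝ} (hab : a ≤ b) :
    Measurable fun x => ⨆ s ∈ Icc a b, |∫ t in a..s, F t x| := by
  simp_rw [fun x => (intervalIntegral.continuous_primitive (hF_int x) a).continuousOn
    |>.biSup_Icc_abs_eq_iSup_rat hab]
  exact Measurable.iSup fun q => (measurable_intervalIntegral_of_measurable_uncurry hF a _).abs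

theorem abs_biSup_Icc_abs_intervalIntegral_le {h : ℝ → ℝ} {M : ℝ} (hM : ∀ t, |h t| ≤ M)
    {a b : ℝ} (hab : a ≤ b) : |(⨆ s ∈ Icc a b, |∫ t in a..s, h t|)| ≤ M * (b - a) := by
  have hbound : 0 ≤ M * (b - a) := mul_nonneg ((abs_nonneg _).trans (hM a)) (sub_nonneg.2 hab)
  rw [abs_of_nonneg (Real.iSup_nonneg fun s => Real.iSup_nonneg fun _ => abs_nonneg _)]
  refine Real.iSup_le (fun s => Real.iSup_le (fun hs => ?_) hbound) hbound
  calc |∫ t in a..s, h t| ≤ M * |s - a| := by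
        simpa only [Real.norm_eq_abs] using intervalIntegral.norm_integral_le_of_norm_le_const
          fun t _ => (Real.norm_eq_abs _).trans_le (hM t)
    _ ≤ M * (b - a) := by
        rw [abs_of_nonneg (sub_nonneg.2 hs.1)]
        gcongr
        · exact (abs_nonneg _).trans (hM a)
        · exact hs.2

end ErgodicIntegrals

theorem correlation_le_ergodic_integral_general
    {X : Type*} [MeasurableSpace X] (μ : Measure X) [IsProbabilityMeasure μ]
    (φ : ℝ → X → X)
    (hφ_meas : Measurable (Function.uncurry φ))
    (hφ_inv : ∀ t, MeasurePreserving (φ t) μ μ)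
    (f : X → ℝ) (hf : Measurable f) (hf_bdd : ∃ M, ∀ x, |f x| ≤ M)
    (g : X → ℝ) (hg : Measurable g) (hg_bdd : ∃ M, ∀ x, |g x| ≤ M)
    (K : ℝ)
    (Dg : X → ℝ) (hDg_bdd : ∀ x, |Dg x| ≤ K)
    (hderiv : ∀ x t, HasDerivAt (fun s => g (φ s x)) (Dg (φ t x)) t) :
    |∫ x, f x * g x ∂μ| ≤
      ((⨆ x, |g x|) + K) *
        ∫ x, (⨆ s ∈ Set.Icc (0 : ℝ) 1, |∫ t in (0 : ℝ)..s, f (φ t x)|) ∂μ := by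
  obtain ⟨Mf, hMf⟩ := hf_bdd
  obtain ⟨Mg, hMg⟩ := hg_bdd
  set S := fun x => ⨆ s ∈ Icc (0 : ℝ) 1, |∫ t in (0 : ℝ)..s, f (φ t x)|
  have hf_int : ∀ x a b, IntervalIntegrable (fun t => f (φ t x)) volume a b := fun x =>
    intervalIntegrable_of_abs_le (hf.comp (hφ_meas.comp measurable_prodMk_right)) fun t => hMf _
  have hS_int : Integrable S μ :=
    .of_bound (measurable_biSup_Icc_abs_intervalIntegral (F := fun t x => f (φ t x))
      (hf.comp hφ_meas) hf_int zero_le_one).aestronglyMeasurable (Mf * (1 - 0)) <|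
      ae_of_all _ fun x => abs_biSup_Icc_abs_intervalIntegral_le (fun t => hMf _) zero_le_one
  have hfg_int : Integrable (fun x => f x * g x) μ := .of_bound (hf.mul hg).aestronglyMeasurable
    (Mf * Mg) <| ae_of_all _ fun x => by
      rw [Real.norm_eq_abs, abs_mul]
      exact mul_le_mul (hMf x) (hMg x) (abs_nonneg _) ((abs_nonneg _).trans (hMf x))
  have hpointwise (x : X) :
      |∫ t in (0 : ℝ)..1, f (φ t x) * g (φ t x)| ≤ ((⨆ x, |g x|) + K) * S x := by
    simpa only [sub_zero, mul_one] using
      abs_intervalIntegral_mul_le zero_le_one (hf_int x 0 1) (hderiv x) (fun t => hDg_bdd _)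
        (le_ciSup ⟨Mg, forall_mem_range.2 hMg⟩ (φ 1 x)) fun s hs =>
          (intervalIntegral.continuous_primitive (hf_int x) 0).continuousOn.abs_le_biSup_Icc_abs hs
  calc |∫ x, f x * g x ∂μ| = |∫ x, (∫ t in (0 : ℝ)..1, f (φ t x) * g (φ t x)) ∂μ| := by
        rw [integral_intervalIntegral_comp_of_measurePreserving (u := fun x => f x * g x)
          hφ_meas hφ_inv (hf.mul hg) hfg_int zero_le_one, sub_zero, one_mul]
    _ ≤ ∫ x, ((⨆ x, |g x|) + K) * S x ∂μ := by
        simpa only [Real.norm_eq_abs] using norm_integral_le_of_norm_le (hS_int.const_mul _)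
          (ae_of_all _ fun x => (Real.norm_eq_abs _).trans_le (hpointwise x))
    _ = ((⨆ x, |g x|) + K) * ∫ x, S x ∂μ := integral_const_mul _ _

/-- Integration-by-parts inequality along a measure-preserving flow: for a bounded measurable
`f` and a bounded measurable `g` that is differentiable along the flow with derivative `Dg`
bounded by `K`, one has
`|∫ f·g dμ| ≤ (sup |g| + K) · ∫ sup_{s ∈ [0,1]} |∫₀^s f(φ_t x) dt| dμ(x)`. -/
theorem correlation_le_ergodic_integral
    {X : Type*} [MeasurableSpace X] (μ : Measure X) [IsProbabilityMeasure μ]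
    (φ : ℝ → X → X)
    (hφ_meas : Measurable (Function.uncurry φ))
    (hφ_zero : ∀ x, φ 0 x = x)
    (hφ_add : ∀ s t x, φ (s + t) x = φ s (φ t x))
    (hφ_inv : ∀ t, MeasurePreserving (φ t) μ μ)
    (f : X → ℝ) (hf : Measurable f) (hf_bdd : ∃ M, ∀ x, |f x| ≤ M)
    (g : X → ℝ) (hg : Measurable g) (hg_bdd : ∃ M, ∀ x, |g x| ≤ M)
    (K : ℝ) (hK : 0 ≤ K)
    (Dg : X → ℝ) (hDg : Measurable Dg) (hDg_bdd : ∀ x, |Dg x| ≤ K)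
    (hderiv : ∀ x t, HasDerivAt (fun s => g (φ s x)) (Dg (φ t x)) t) :
    |∫ x, f x * g x ∂μ| ≤
      ((⨆ x, |g x|) + K) *
        ∫ x, (⨆ s ∈ Set.Icc (0 : ℝ) 1, |∫ t in (0 : ℝ)..s, f (φ t x)|) ∂μ :=
  correlation_le_ergodic_integral_general μ φ hφ_meas hφ_inv f hf hf_bdd g hg hg_bdd K Dg hDg_bdd
    hderiv
end

section
/- Let (X, μ) be a probability space and let φ : ℝ × X → X be a jointly measurable flow: φ(0, ·) = id, φ(s+t, ·) = φ(s, φ(t, ·)) for all s, t ∈ ℝ, and each map φ(t, ·) preserves μ. Let λ > 1 and let T : X → X be a measure-preserving map satisfying the renormalization identity T(φ(t, x)) = φ(λ t, T x) for all t ∈ ℝ and x ∈ X. Let f : X → ℝ be bounded measurable and suppose there exist C > 0 and γ ∈ (0, 1) such that | ∫₀^S f(φ(t, x)) dt | ≤ C · S^{1-γ} for all x ∈ X and all S > 0. Let g : X → ℝ be bounded measurable, K ≥ 0, and suppose there is a bounded measurable Dg : X → ℝ with |Dg| ≤ K such that for every x the function t ↦ g(φ(t, x)) is differentiable with derivative t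 ↦ Dg(φ(t, x)). Then for every natural number n: | ∫_X f(Tⁿ x) · g(x) dμ(x) | ≤ C · ( sup|g| + K ) · λ^{-γ n}. -/
/-!
Since every `φ t` preserves `μ`, the correlation `∫ f(Tⁿ x) g(x) dμ` equals its average over the
time interval `[0, 1]`, i.e. the `μ`-integral of `∫₀¹ f(Tⁿ(φ t x)) g(φ t x) dt`. Integrating by
parts against the primitive `U(s) = ∫₀ˢ f(Tⁿ(φ t x)) dt` (absolutely continuous, `U 0 = 0`) bounds
this orbit integral by `(sup |g| + K) · sup_{s ≤ 1} |U s|`. Renormalization rescales `U s` into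
`λ⁻ⁿ` times an ergodic integral of `f` of length `λⁿ s ≤ λⁿ`, which is at most
`λ⁻ⁿ C λ^{n(1-γ)} = C λ^{-γn}`.
-/

open MeasureTheory Set
open scoped Interval

theorem abs_intervalIntegral_mul_le_s10 {u v : ℝ → ℝ} {a b G K E : ℝ} (hab : a ≤ b)
    (hu : IntervalIntegrable u volume a b) (hv : AbsolutelyContinuousOnInterval v a b)
    (hv' : ∀ᵐ t, t ∈ Ι a b → |deriv v t| ≤ K) (hvb : |v b| ≤ G)
    (hU : ∀ s ∈ Icc a b, |∫ t in a..s, u t| ≤ E) :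
    |∫ t in a..b, u t * v t| ≤ (G + K * (b - a)) * E := by
  set U : ℝ → ℝ := fun s => ∫ t in a..s, u t
  have hE : 0 ≤ E := by simpa [U] using hU a ⟨le_rfl, hab⟩
  have hparts : ∫ t in a..b, u t * v t = v b * U b - ∫ t in a..b, deriv v t * U t := by
    have hderivU : ∫ t in a..b, u t * v t = ∫ t in a..b, v t * deriv U t := by
      refine intervalIntegral.integral_congr_ae ?_
      filter_upwards [hu.ae_hasDerivAt_integral] with t ht htab
      rw [(ht (uIoc_subset_uIcc htab) a left_mem_uIcc).deriv, mul_comm]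
    simp [hderivU, hv.integral_mul_deriv_eq_deriv_mul
      (hu.absolutelyContinuousOnInterval_intervalIntegral left_mem_uIcc), U]
  have hrest : |∫ t in a..b, deriv v t * U t| ≤ K * E * (b - a) := by
    have := intervalIntegral.norm_integral_le_of_norm_le_const_ae (C := K * E)
      (f := fun t => deriv v t * U t) (a := a) (b := b) ?_
    · simpa [abs_of_nonneg (sub_nonneg.2 hab)] using this
    filter_upwards [hv'] with t hKt ht
    have ht' : t ∈ Ioc a b := by rwa [uIoc_of_le hab] at ht
    rw [Real.norm_eq_abs, abs_mul, mul_comm K, mul_comm |deriv v t|]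
    exact mul_le_mul (hU t ⟨ht'.1.le, ht'.2⟩) (hKt ht) (abs_nonneg _) hE
  calc |∫ t in a..b, u t * v t|
      ≤ |v b| * |U b| + |∫ t in a..b, deriv v t * U t| := by
        rw [hparts, ← abs_mul]; exact abs_sub _ _
    _ ≤ G * E + K * E * (b - a) :=
        add_le_add
          (mul_le_mul hvb (hU b ⟨hab, le_rfl⟩) (abs_nonneg _) ((abs_nonneg _).trans hvb)) hrest
    _ = (G + K * (b - a)) * E := by ring

theorem abs_intervalIntegral_mul_le_of_hasDerivAt {u v v' : ℝ → ℝ} {a b G K E : ℝ} (hab : a ≤ b)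
    (hu : IntervalIntegrable u volume a b) (hv : ∀ t, HasDerivAt v (v' t) t)
    (hv' : ∀ t, |v' t| ≤ K) (hvb : |v b| ≤ G)
    (hU : ∀ s ∈ Icc a b, |∫ t in a..s, u t| ≤ E) :
    |∫ t in a..b, u t * v t| ≤ (G + K * (b - a)) * E := by
  have hlip : LipschitzWith K.toNNReal v :=
    lipschitzWith_of_nnnorm_deriv_le (fun t => (hv t).differentiableAt) fun t => by
      rw [(hv t).deriv, ← NNReal.coe_le_coe, coe_nnnorm,
        Real.coe_toNNReal _ ((abs_nonneg _).trans (hv' 0))]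
      exact hv' t
  exact abs_intervalIntegral_mul_le_s10 hab hu hlip.lipschitzOnWith.absolutelyContinuousOnInterval
    (ae_of_all _ fun t _ => (hv t).deriv ▸ hv' t) hvb hU

theorem MeasureTheory.MeasurePreserving.integral_comp_of_stronglyMeasurable {α β E : Type*}
    [MeasurableSpace α] [MeasurableSpace β] [NormedAddCommGroup E] [NormedSpace ℝ E]
    {μ : Measure α} {ν : Measure β} {f : α → β} (hf : MeasurePreserving f μ ν) {g : β → E}
    (hg : StronglyMeasurable g) : ∫ x, g (f x) ∂μ = ∫ y, g y ∂ν := by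
  rw [← hf.map_eq, integral_map hf.aemeasurable hg.aestronglyMeasurable]

theorem integral_intervalIntegral_comp_flow {X E : Type*} [MeasurableSpace X]
    [NormedAddCommGroup E] [NormedSpace ℝ E] [CompleteSpace E] {μ : Measure X} [IsFiniteMeasure μ]
    {φ : ℝ → X → X} (hφ_meas : Measurable (Function.uncurry φ))
    (hφ_inv : ∀ t, MeasurePreserving (φ t) μ μ) {F : X → E} (hF : StronglyMeasurable F)
    (hFi : Integrable F μ) (a b : ℝ) :
    ∫ x, (∫ t in a..b, F (φ t x)) ∂μ = (b - a) • ∫ x, F x ∂μ := by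
  have hint : Integrable (Function.uncurry fun t x => F (φ t x))
      ((volume.restrict (Ι a b)).prod μ) := by
    refine (integrable_prod_iff (hF.comp_measurable hφ_meas).aestronglyMeasurable).2
      ⟨ae_of_all _ fun t => (hφ_inv t).integrable_comp_of_integrable hFi, ?_⟩
    simp only [Function.comp_apply, Function.uncurry_apply_pair,
      fun t => (hφ_inv t).integral_comp_of_stronglyMeasurable hF.norm]
    have : IsFiniteMeasure (volume.restrict (Ι a b)) :=
      isFiniteMeasure_restrict.2 measure_Ioc_lt_top.ne
    exact integrable_const _
  simp only [← intervalIntegral_integral_swap hint,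
    fun t => (hφ_inv t).integral_comp_of_stronglyMeasurable hF, intervalIntegral.integral_const]

theorem inv_pow_mul_rpow_le_rpow {lam S γ : ℝ} (hlam : 0 < lam) (hS0 : 0 ≤ S) (hS1 : S ≤ 1)
    (hγ1 : γ ≤ 1) (n : ℕ) :
    (lam ^ n)⁻¹ * (lam ^ n * S) ^ (1 - γ) ≤ lam ^ (-(γ * n)) := by
  have hpow : (lam ^ n)⁻¹ * (lam ^ n) ^ (1 - γ) = lam ^ (-(γ * n)) := by
    rw [← Real.rpow_natCast, ← Real.rpow_neg hlam.le, ← Real.rpow_mul hlam.le,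
      ← Real.rpow_add hlam]
    ring_nf
  calc (lam ^ n)⁻¹ * (lam ^ n * S) ^ (1 - γ)
      = lam ^ (-(γ * n)) * S ^ (1 - γ) := by
        rw [Real.mul_rpow (by positivity) hS0, ← mul_assoc, hpow]
    _ ≤ lam ^ (-(γ * n)) := mul_le_of_le_one_right (by positivity)
        (Real.rpow_le_one hS0 hS1 (sub_nonneg.2 hγ1))

section Renormalization

variable {X : Type*} {φ : ℝ → X → X} {T : X → X} {lam : ℝ}

theorem iterate_apply_flow_of_renormalization
    (hren : ∀ t x, T (φ t x) = φ (lam * t) (T x)) (n : ℕ) (t : ℝ) (x : X) :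
    T^[n] (φ t x) = φ (lam ^ n * t) (T^[n] x) := by
  induction n generalizing t x with
  | zero => simp
  | succ n ih =>
    rw [Function.iterate_succ_apply, hren, ih, Function.iterate_succ_apply, pow_succ, mul_assoc]

theorem intervalIntegral_comp_iterate_flow
    (hren : ∀ t x, T (φ t x) = φ (lam * t) (T x)) (hlam : lam ≠ 0) (f : X → ℝ) (n : ℕ)
    (x : X) (S : ℝ) :
    ∫ t in 0..S, f (T^[n] (φ t x)) = (lam ^ n)⁻¹ * ∫ t in 0..lam ^ n * S, f (φ t (T^[n] x)) := by
  simp only [iterate_apply_flow_of_renormalization hren,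
    intervalIntegral.integral_comp_mul_left (fun t => f (φ t (T^[n] x))) (pow_ne_zero n hlam),
    mul_zero, smul_eq_mul]

theorem abs_intervalIntegral_comp_iterate_flow_le {C γ : ℝ} {f : X → ℝ}
    (hren : ∀ t x, T (φ t x) = φ (lam * t) (T x)) (hlam : 0 < lam) (hC : 0 ≤ C) (hγ1 : γ ≤ 1)
    (hergodic : ∀ x : X, ∀ S : ℝ, 0 < S → |∫ t in (0 : ℝ)..S, f (φ t x)| ≤ C * S ^ (1 - γ))
    (n : ℕ) (x : X) {S : ℝ} (hS : S ∈ Icc (0 : ℝ) 1) :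
    |∫ t in 0..S, f (T^[n] (φ t x))| ≤ C * lam ^ (-(γ * n)) := by
  rcases hS.1.eq_or_lt with rfl | hS0
  · simp only [intervalIntegral.integral_same, abs_zero]; positivity
  have hln : 0 < lam ^ n := pow_pos hlam n
  calc |∫ t in 0..S, f (T^[n] (φ t x))|
      = (lam ^ n)⁻¹ * |∫ t in 0..lam ^ n * S, f (φ t (T^[n] x))| := by
        rw [intervalIntegral_comp_iterate_flow hren hlam.ne', abs_mul, abs_of_pos (inv_pos.2 hln)]
    _ ≤ (lam ^ n)⁻¹ * (C * (lam ^ n * S) ^ (1 - γ)) := by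
        gcongr; exact hergodic _ _ (mul_pos hln hS0)
    _ = C * ((lam ^ n)⁻¹ * (lam ^ n * S) ^ (1 - γ)) := by ring
    _ ≤ C * lam ^ (-(γ * n)) := by gcongr; exact inv_pow_mul_rpow_le_rpow hlam hS.1 hS.2 hγ1 n

end Renormalization

theorem exponential_mixing_of_renormalization_general
    {X : Type*} [MeasurableSpace X] (μ : Measure X) [IsProbabilityMeasure μ]
    (φ : ℝ → X → X)
    (hφ_meas : Measurable (Function.uncurry φ))
    (hφ_inv : ∀ t, MeasurePreserving (φ t) μ μ)
    (lam : ℝ) (hlam : 1 < lam)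
    (T : X → X) (hT : MeasurePreserving T μ μ)
    (hren : ∀ t x, T (φ t x) = φ (lam * t) (T x))
    (f : X → ℝ) (hf : Measurable f) (hf_bdd : ∃ M, ∀ x, |f x| ≤ M)
    (C : ℝ) (hC : 0 < C) (γ : ℝ) (hγ1 : γ < 1)
    (hergodic : ∀ x : X, ∀ S : ℝ, 0 < S →
      |∫ t in (0 : ℝ)..S, f (φ t x)| ≤ C * S ^ (1 - γ))
    (g : X → ℝ) (hg : Measurable g) (hg_bdd : ∃ M, ∀ x, |g x| ≤ M)
    (K : ℝ)
    (Dg : X → ℝ) (hDg_bdd : ∀ x, |Dg x| ≤ K)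
    (hderiv : ∀ x t, HasDerivAt (fun s => g (φ s x)) (Dg (φ t x)) t) :
    ∀ n : ℕ,
      |∫ x, f (T^[n] x) * g x ∂μ| ≤
        C * ((⨆ x, |g x|) + K) * lam ^ (-(γ * n)) := by
  intro n
  obtain ⟨M, hM⟩ := hf_bdd
  obtain ⟨Mg, hMg⟩ := hg_bdd
  have hgG : ∀ x, |g x| ≤ ⨆ x, |g x| := le_ciSup ⟨Mg, forall_mem_range.2 hMg⟩
  have hfn : Measurable fun x => f (T^[n] x) := hf.comp (hT.iterate n).measurable
  have hFi : Integrable (fun x => f (T^[n] x) * g x) μ :=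
    .of_bound (hfn.mul hg).aestronglyMeasurable (M * Mg) (ae_of_all _ fun x => by
      rw [Real.norm_eq_abs, abs_mul]
      exact mul_le_mul (hM _) (hMg x) (abs_nonneg _) ((abs_nonneg _).trans (hM x)))
  have hpoint : ∀ x, |∫ t in 0..1, f (T^[n] (φ t x)) * g (φ t x)| ≤
      ((⨆ x, |g x|) + K * (1 - 0)) * (C * lam ^ (-(γ * n))) := fun x =>
    abs_intervalIntegral_mul_le_of_hasDerivAt zero_le_one
      (intervalIntegrable_const.mono_fun
        (hfn.comp (hφ_meas.comp measurable_prodMk_right)).aestronglyMeasurable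
        (ae_of_all _ fun t => (hM _).trans (Real.norm_eq_abs M ▸ le_abs_self M)))
      (hderiv x) (fun t => hDg_bdd _) (hgG _)
      (fun s hs => abs_intervalIntegral_comp_iterate_flow_le hren (zero_lt_one.trans hlam) hC.le
        hγ1.le hergodic n x hs)
  have havg := integral_intervalIntegral_comp_flow (F := fun x => f (T^[n] x) * g x) hφ_meas
    hφ_inv (hfn.mul hg).stronglyMeasurable hFi 0 1
  calc |∫ x, f (T^[n] x) * g x ∂μ|
      = |∫ x, (∫ t in 0..1, f (T^[n] (φ t x)) * g (φ t x)) ∂μ| := by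
        rw [havg, sub_zero, one_smul]
    _ ≤ ((⨆ x, |g x|) + K * (1 - 0)) * (C * lam ^ (-(γ * n))) := by
        simpa using norm_integral_le_of_norm_le_const
          (ae_of_all μ fun x => (Real.norm_eq_abs _).trans_le (hpoint x))
    _ = C * ((⨆ x, |g x|) + K) * lam ^ (-(γ * n)) := by ring

/-- Abstract exponential mixing of a renormalizing map (Proposition 8.2 of the paper):
if `T` renormalizes the measure-preserving flow `φ` via `T (φ t x) = φ (λ t) (T x)` with
`λ > 1`, and the ergodic integrals of `f` satisfy `|∫₀^S f(φ_t x) dt| ≤ C S^(1-γ)`, then for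
every bounded observable `g`, differentiable along the flow with derivative bounded by `K`,
`|∫ f(Tⁿ x) g(x) dμ| ≤ C (sup |g| + K) λ^(-γ n)`. -/
theorem exponential_mixing_of_renormalization
    {X : Type*} [MeasurableSpace X] (μ : Measure X) [IsProbabilityMeasure μ]
    (φ : ℝ → X → X)
    (hφ_meas : Measurable (Function.uncurry φ))
    (hφ_zero : ∀ x, φ 0 x = x)
    (hφ_add : ∀ s t x, φ (s + t) x = φ s (φ t x))
    (hφ_inv : ∀ t, MeasurePreserving (φ t) μ μ)
    (lam : ℝ) (hlam : 1 < lam)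
    (T : X → X) (hT : MeasurePreserving T μ μ)
    (hren : ∀ t x, T (φ t x) = φ (lam * t) (T x))
    (f : X → ℝ) (hf : Measurable f) (hf_bdd : ∃ M, ∀ x, |f x| ≤ M)
    (C : ℝ) (hC : 0 < C) (γ : ℝ) (hγ : 0 < γ) (hγ1 : γ < 1)
    (hergodic : ∀ x : X, ∀ S : ℝ, 0 < S →
      |∫ t in (0 : ℝ)..S, f (φ t x)| ≤ C * S ^ (1 - γ))
    (g : X → ℝ) (hg : Measurable g) (hg_bdd : ∃ M, ∀ x, |g x| ≤ M)
    (K : ℝ) (hK : 0 ≤ K)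
    (Dg : X → ℝ) (hDg : Measurable Dg) (hDg_bdd : ∀ x, |Dg x| ≤ K)
    (hderiv : ∀ x t, HasDerivAt (fun s => g (φ s x)) (Dg (φ t x)) t) :
    ∀ n : ℕ,
      |∫ x, f (T^[n] x) * g x ∂μ| ≤
        C * ((⨆ x, |g x|) + K) * lam ^ (-(γ * n)) :=
  exponential_mixing_of_renormalization_general μ φ hφ_meas hφ_inv lam hlam T hT hren f hf hf_bdd C
    hC γ hγ1 hergodic g hg hg_bdd K Dg hDg_bdd hderiv
end

section
/- Let L be the free Lie algebra over ℝ on three generators X₁, X₂, X₃. Let α₂, α₃, b₁, b₂, b₃ ∈ ℝ and set V = X₁ + α₂·X₂ + α₃·X₃ and W = b₁·⁅X₁, X₂⁆ + b₂·⁅X₂, X₃⁆ + b₃·⁅X₁, X₃⁆. If ⁅V, W⁆ = 0 in L, then b₁ = b₂ = b₃ = 0, i.e. W = 0. -/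
/-!
A relation among `X₁, X₂, X₃` in the free Lie algebra holds for every triple of elements of every
Lie algebra, so it suffices to find matrix Lie algebras in which `⁅V, W⁆` isolates each
coefficient. In `gl₄`, sending `X₁ ↦ E₀₁ + E₁₂` and `X₂ ↦ E₂₃`, `X₃ ↦ 0` kills every bracket
of degree three except `⁅X₁, ⁅X₁, X₂⁆⁆ = E₀₃`, which detects `b₁`; exchanging the roles of `X₂`
and `X₃` detects `b₃`. In `gl₃`, sending `X₁ ↦ E₂₀`, `X₂ ↦ E₀₁`, `X₃ ↦ E₁₂` makes the
`(0, 0)` entry of `⁅V, W⁆` equal to `-(b₂ + α₂ b₃)`.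
-/

open Matrix

section

variable {R L : Type*} [CommRing R] [LieRing L] [LieAlgebra R L]

def flowGenerator (α₂ α₃ : R) (x y z : L) : L := x + α₂ • y + α₃ • z

def degreeTwoElement (b₁ b₂ b₃ : R) (x y z : L) : L := b₁ • ⁅x, y⁆ + b₂ • ⁅y, z⁆ + b₃ • ⁅x, z⁆

theorem lie_flowGenerator_degreeTwoElement_eq_zero_of_free {α₂ α₃ b₁ b₂ b₃ : R}
    (h : ⁅flowGenerator α₂ α₃ (FreeLieAlgebra.of R (0 : Fin 3)) (.of R 1) (.of R 2),
      degreeTwoElement b₁ b₂ b₃ (FreeLieAlgebra.of R (0 : Fin 3)) (.of R 1) (.of R 2)⁆ = 0)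
    (x y z : L) : ⁅flowGenerator α₂ α₃ x y z, degreeTwoElement b₁ b₂ b₃ x y z⁆ = 0 := by
  simpa [flowGenerator, degreeTwoElement] using congrArg (FreeLieAlgebra.lift R ![x, y, z]) h

end

section

attribute [local instance] LieRing.ofAssociativeRing LieAlgebra.ofAssociativeAlgebra

variable {R : Type*} [CommRing R] (α₂ α₃ b₁ b₂ b₃ : R)

theorem lie_flowGenerator_degreeTwoElement_single_apply_zero_three_left :
    ⁅flowGenerator α₂ α₃ (single 0 1 1 + single 1 2 1 : Matrix (Fin 4) (Fin 4) R) (single 2 3 1) 0,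
      degreeTwoElement b₁ b₂ b₃ (single 0 1 1 + single 1 2 1 : Matrix (Fin 4) (Fin 4) R)
        (single 2 3 1) 0⁆ 0 3 = b₁ := by
  simp [flowGenerator, degreeTwoElement, Ring.lie_def, mul_apply, Fin.sum_univ_four, single_apply]

theorem lie_flowGenerator_degreeTwoElement_single_apply_zero_three_right :
    ⁅flowGenerator α₂ α₃ (single 0 1 1 + single 1 2 1 : Matrix (Fin 4) (Fin 4) R) 0 (single 2 3 1),
      degreeTwoElement b₁ b₂ b₃ (single 0 1 1 + single 1 2 1 : Matrix (Fin 4) (Fin 4) R) 0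
        (single 2 3 1)⁆ 0 3 = b₃ := by
  simp [flowGenerator, degreeTwoElement, Ring.lie_def, mul_apply, Fin.sum_univ_four, single_apply]

theorem lie_flowGenerator_degreeTwoElement_single_apply_zero_zero :
    ⁅flowGenerator α₂ α₃ (single 2 0 1 : Matrix (Fin 3) (Fin 3) R) (single 0 1 1) (single 1 2 1),
      degreeTwoElement b₁ b₂ b₃ (single 2 0 1 : Matrix (Fin 3) (Fin 3) R) (single 0 1 1)
        (single 1 2 1)⁆ 0 0 = -(b₂ + α₂ * b₃) := by
  simp [flowGenerator, degreeTwoElement, Ring.lie_def, mul_apply, single_apply]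
  ring

variable {α₂ α₃ b₁ b₂ b₃} in
theorem FreeLieAlgebra.eq_zero_of_lie_flowGenerator_degreeTwoElement_eq_zero
    (h : ⁅flowGenerator α₂ α₃ (FreeLieAlgebra.of R (0 : Fin 3)) (.of R 1) (.of R 2),
      degreeTwoElement b₁ b₂ b₃ (FreeLieAlgebra.of R (0 : Fin 3)) (.of R 1) (.of R 2)⁆ = 0) :
    b₁ = 0 ∧ b₂ = 0 ∧ b₃ = 0 := by
  have hb₁ := congrArg (· 0 3) (lie_flowGenerator_degreeTwoElement_eq_zero_of_free h
    (single 0 1 1 + single 1 2 1 : Matrix (Fin 4) (Fin 4) R) (single 2 3 1) 0)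
  have hb₃ := congrArg (· 0 3) (lie_flowGenerator_degreeTwoElement_eq_zero_of_free h
    (single 0 1 1 + single 1 2 1 : Matrix (Fin 4) (Fin 4) R) 0 (single 2 3 1))
  have hb₂ := congrArg (· 0 0) (lie_flowGenerator_degreeTwoElement_eq_zero_of_free h
    (single 2 0 1 : Matrix (Fin 3) (Fin 3) R) (single 0 1 1) (single 1 2 1))
  rw [lie_flowGenerator_degreeTwoElement_single_apply_zero_three_left, Matrix.zero_apply] at hb₁
  rw [lie_flowGenerator_degreeTwoElement_single_apply_zero_three_right, Matrix.zero_apply] at hb₃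
  rw [lie_flowGenerator_degreeTwoElement_single_apply_zero_zero, Matrix.zero_apply, hb₃,
    mul_zero, add_zero, neg_eq_zero] at hb₂
  exact ⟨hb₁, hb₂, hb₃⟩

end

/-- In the free Lie algebra over `ℝ` on three generators `X₁, X₂, X₃`, if
`V = X₁ + α₂ X₂ + α₃ X₃` and `W = b₁ ⁅X₁,X₂⁆ + b₂ ⁅X₂,X₃⁆ + b₃ ⁅X₁,X₃⁆` satisfy
`⁅V, W⁆ = 0`, then `b₁ = b₂ = b₃ = 0`. -/
theorem freeLieAlgebra_centralizer_degree_two_trivial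
    (α₂ α₃ b₁ b₂ b₃ : ℝ)
    (h : ⁅(FreeLieAlgebra.of ℝ (0 : Fin 3) + α₂ • FreeLieAlgebra.of ℝ (1 : Fin 3)
            + α₃ • FreeLieAlgebra.of ℝ (2 : Fin 3)),
          (b₁ • ⁅FreeLieAlgebra.of ℝ (0 : Fin 3), FreeLieAlgebra.of ℝ (1 : Fin 3)⁆
            + b₂ • ⁅FreeLieAlgebra.of ℝ (1 : Fin 3), FreeLieAlgebra.of ℝ (2 : Fin 3)⁆
            + b₃ • ⁅FreeLieAlgebra.of ℝ (0 : Fin 3), FreeLieAlgebra.of ℝ (2 : Fin 3)⁆)⁆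
          = 0) :
    b₁ = 0 ∧ b₂ = 0 ∧ b₃ = 0 :=
  FreeLieAlgebra.eq_zero_of_lie_flowGenerator_degreeTwoElement_eq_zero h
end
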